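/- Let μ > 0, κ ≥ 0, σ > 0, n ≥ 1 an integer, and let (pₙ(t), qₙ(t)) solve the linear system pₙ' = nπ qₙ, qₙ' = −nπ(1+σn²π²)pₙ − (μn²π²+κ)qₙ + (βₙ/(nπ)) f(t), where βₙ = √2((−1)ⁿ−1) and f ∈ L²(0,T). Define Pₙ(t) = (1/2)n²π²qₙ(t)² + n²π²(1+σn²π²)pₙ(t)² + (1/2)n²π²(qₙ(t) + ((μn²π²+κ)/(nπ))pₙ(t))². Then for a.e. t ∈ (0,T): Pₙ'(t) = −(μn²π²+κ)n²π²qₙ(t)² − (1+σn²π²)(μn²π²+κ)n²π²pₙ(t)² + nπβₙ(2qₙ(t) + ((μn²π²+κ)/(nπ))pₙ(t))f(t). -/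

import Mathlib

open MeasureTheory Set

/-- The modal Lyapunov functional Pₙ for the n-th Fourier mode
(pₙ, qₙ) of the closed-loop tank-liquid system. -/
noncomputable def Pmod (μ κ σ : ℝ) (n : ℕ) (p q : ℝ → ℝ) (t : ℝ) : ℝ :=
  (1/2) * (n:ℝ)^2 * Real.pi^2 * (q t)^2
    + (n:ℝ)^2 * Real.pi^2 * (1 + σ * (n:ℝ)^2 * Real.pi^2) * (p t)^2
    + (1/2) * (n:ℝ)^2 * Real.pi^2
        * (q t + ((μ * (n:ℝ)^2 * Real.pi^2 + κ) / ((n:ℝ) * Real.pi)) * p t)^2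

/-- The cross terms `± a³ b p q` produced by the `q²`- and `p²`-parts and by the mixed square
cancel, which is why this combination is dissipative. -/
theorem hasDerivAt_modal_lyapunov {a b c h t : ℝ} {p q : ℝ → ℝ} (ha : a ≠ 0)
    (hp : HasDerivAt p (a * q t) t) (hq : HasDerivAt q (-a * b * p t - c * q t + h) t) :
    HasDerivAt
      (fun s => 1 / 2 * a ^ 2 * q s ^ 2 + a ^ 2 * b * p s ^ 2
        + 1 / 2 * a ^ 2 * (q s + c / a * p s) ^ 2)
      (-c * a ^ 2 * q t ^ 2 - b * c * a ^ 2 * p t ^ 2 + a ^ 2 * (2 * q t + c / a * p t) * h) t := by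
  have hmix := (hq.add (hp.const_mul (c / a))).pow 2
  have hsum := ((hq.pow 2).const_mul (1 / 2 * a ^ 2)).add ((hp.pow 2).const_mul (a ^ 2 * b))
    |>.add (hmix.const_mul (1 / 2 * a ^ 2))
  refine hsum.congr_deriv ?_
  norm_num [Pi.add_apply]
  field_simp
  ring

theorem Pmod_derivative_general (μ κ σ T : ℝ) (n : ℕ) (p q f : ℝ → ℝ)
    (hn : 1 ≤ n)
    (hp : ∀ t ∈ Icc (0:ℝ) T, HasDerivAt p ((n:ℝ) * Real.pi * q t) t)
    (hq : ∀ᵐ t ∂(volume.restrict (Ioo (0:ℝ) T)), HasDerivAt q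
      (-(n:ℝ) * Real.pi * (1 + σ * (n:ℝ)^2 * Real.pi^2) * p t
        - (μ * (n:ℝ)^2 * Real.pi^2 + κ) * q t
        + (Real.sqrt 2 * ((-1:ℝ)^n - 1) / ((n:ℝ) * Real.pi)) * f t) t) :
    ∀ᵐ t ∂(volume.restrict (Ioo (0:ℝ) T)),
      HasDerivAt (Pmod μ κ σ n p q)
        (-(μ * (n:ℝ)^2 * Real.pi^2 + κ) * (n:ℝ)^2 * Real.pi^2 * (q t)^2
          - (1 + σ * (n:ℝ)^2 * Real.pi^2) * (μ * (n:ℝ)^2 * Real.pi^2 + κ)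
              * (n:ℝ)^2 * Real.pi^2 * (p t)^2
          + (n:ℝ) * Real.pi * (Real.sqrt 2 * ((-1:ℝ)^n - 1))
              * (2 * q t + ((μ * (n:ℝ)^2 * Real.pi^2 + κ) / ((n:ℝ) * Real.pi)) * p t)
              * f t) t := by
  filter_upwards [hq, ae_restrict_mem measurableSet_Ioo] with t hqt ht
  have hnπ : (n:ℝ) * Real.pi ≠ 0 := by
    have : (0:ℝ) < n := by exact_mod_cast hn
    positivity
  have hP := hasDerivAt_modal_lyapunov (b := 1 + σ * (n:ℝ)^2 * Real.pi^2)
    (c := μ * (n:ℝ)^2 * Real.pi^2 + κ)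
    (h := Real.sqrt 2 * ((-1:ℝ)^n - 1) / ((n:ℝ) * Real.pi) * f t) hnπ
    (hp t (Ioo_subset_Icc_self ht)) (hqt.congr_deriv (by ring))
  convert hP using 1
  · funext s
    simp only [Pmod]
    ring
  · field_simp

/-- exact derivative identity for the modal Lyapunov functional
along solutions of pₙ' = nπqₙ, qₙ' = −nπ(1+σn²π²)pₙ − (μn²π²+κ)qₙ + (βₙ/(nπ))f. -/
theorem Pmod_derivative (μ κ σ T : ℝ) (n : ℕ) (p q f : ℝ → ℝ)
    (hμ : 0 < μ) (hκ : 0 ≤ κ) (hσ : 0 < σ) (hT : 0 < T) (hn : 1 ≤ n)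
    (hf : MemLp f 2 (volume.restrict (Ioo (0:ℝ) T)))
    (hp : ∀ t ∈ Icc (0:ℝ) T, HasDerivAt p ((n:ℝ) * Real.pi * q t) t)
    (hq : ∀ᵐ t ∂(volume.restrict (Ioo (0:ℝ) T)), HasDerivAt q
      (-(n:ℝ) * Real.pi * (1 + σ * (n:ℝ)^2 * Real.pi^2) * p t
        - (μ * (n:ℝ)^2 * Real.pi^2 + κ) * q t
        + (Real.sqrt 2 * ((-1:ℝ)^n - 1) / ((n:ℝ) * Real.pi)) * f t) t) :
    ∀ᵐ t ∂(volume.restrict (Ioo (0:ℝ) T)),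
      HasDerivAt (Pmod μ κ σ n p q)
        (-(μ * (n:ℝ)^2 * Real.pi^2 + κ) * (n:ℝ)^2 * Real.pi^2 * (q t)^2
          - (1 + σ * (n:ℝ)^2 * Real.pi^2) * (μ * (n:ℝ)^2 * Real.pi^2 + κ)
              * (n:ℝ)^2 * Real.pi^2 * (p t)^2
          + (n:ℝ) * Real.pi * (Real.sqrt 2 * ((-1:ℝ)^n - 1))
              * (2 * q t + ((μ * (n:ℝ)^2 * Real.pi^2 + κ) / ((n:ℝ) * Real.pi)) * p t)
              * f t) t :=
  Pmod_derivative_general μ κ σ T n p q f hn hp hq
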